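/- Let p be a prime. Then for every n with 1 ≤ n ≤ p-1 one has B_n ≡ ∑_{m=1}^{p-1} (-1)^m D_{m-1} (-m)^n (mod p). -/

import Mathlib

/-- The Bell numbers: `bell n` is the number of partitions of an `n`-element set,
determined by `bell 0 = 1` and `bell (n+1) = ∑_{k=0}^{n} C(n,k) * bell k`. -/
def bell : ℕ → ℕ
  | 0 => 1
  | n + 1 => ∑ k ∈ (Finset.range (n + 1)).attach, n.choose k * bell k
decreasing_by exact Finset.mem_range.mp k.2

/-!
Write `T f = ∑_{m=1}^{p-1} (-1)^m D_{m-1} f(-m)` (`derangementSum (p - 1) f`). The derangement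
recursion `D_{m+1} = (m+1) D_m - (-1)^m` says `-m c_m = c_{m+1} + 1` for the weights
`c_m = (-1)^m D_{m-1}`, so summing by parts gives, over `𝔽_p`,
`T (x f(x)) = T (f(x+1)) - D_{p-1} f(1) + ∑_{x ∈ 𝔽_p} f(x)`.
For `f = x^k` with `k < p - 1` the last sum vanishes, so after expanding `(x+1)^k` the values
`T (x^n)` obey the Bell recursion, except that `T 1` is `D_{p-1} + 1` instead of `1`: the term
`- D_{p-1} f(1)` absorbs exactly this discrepancy. The value of `T 1` comes from
`∑_{m<N} (-1)^m D_m = ∑_{j<N} (-1)^j j! C(N, j+1)`, which for `N = p` collapses to `(p-1)! = -1`.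
-/

open Finset

theorem bell_succ (n : ℕ) : bell (n + 1) = ∑ k ∈ range (n + 1), n.choose k * bell k := by
  rw [bell, sum_attach (range (n + 1)) fun k ↦ n.choose k * bell k]

theorem eq_bell_of_recursion {R : Type*} [CommSemiring R] (w : ℕ → R) (K : ℕ) (h0 : w 0 = 1)
    (hsucc : ∀ k < K, w (k + 1) = ∑ j ∈ range (k + 1), (k.choose j : R) * w j) :
    ∀ n ≤ K, w n = bell n := by
  intro n
  induction n using Nat.strong_induction_on with
  | _ n ih =>
    intro hn
    rcases n with _ | k
    · rw [h0, bell, Nat.cast_one]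
    · rw [hsucc k (by omega), bell_succ]
      push_cast
      refine sum_congr rfl fun j hj ↦ ?_
      rw [mem_range] at hj
      rw [ih j (by omega) (by omega)]

section Derangements

variable {R : Type*} [CommRing R]

theorem neg_one_pow_mul_numDerangements_succ (n : ℕ) :
    (-1 : R) ^ (n + 1) * numDerangements (n + 1) =
      1 - (n + 1) * ((-1) ^ n * numDerangements n) := by
  have h := congrArg (Int.cast : ℤ → R) (numDerangements_succ n)
  have hsq : ((-1 : R) ^ n) ^ 2 = 1 := by rw [← pow_mul, pow_mul', neg_one_sq, one_pow]
  push_cast at h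
  linear_combination (-1 : R) ^ (n + 1) * h + hsq

theorem neg_one_pow_mul_numDerangements (n : ℕ) :
    (-1 : R) ^ n * numDerangements n =
      ∑ j ∈ range (n + 1), (-1) ^ j * ((j.factorial * n.choose j : ℕ) : R) := by
  simp_rw [← Nat.descFactorial_eq_factorial_mul_choose]
  induction n with
  | zero => simp
  | succ n ih =>
    rw [neg_one_pow_mul_numDerangements_succ, ih, sum_range_succ' _ (n + 1), mul_sum,
      sub_eq_neg_add, ← sum_neg_distrib]
    congr 1
    · refine sum_congr rfl fun j _ ↦ ?_
      rw [Nat.succ_descFactorial_succ]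
      push_cast
      ring
    · simp

theorem sum_range_neg_one_pow_mul_numDerangements (N : ℕ) :
    ∑ m ∈ range N, (-1 : R) ^ m * numDerangements m =
      ∑ j ∈ range N, (-1) ^ j * ((j.factorial * N.choose (j + 1) : ℕ) : R) := by
  induction N with
  | zero => simp
  | succ N ih =>
    simp_rw [sum_range_succ _ N, ih, Nat.choose_succ_succ', neg_one_pow_mul_numDerangements,
      sum_range_succ _ N, Nat.choose_succ_self]
    push_cast
    simp only [mul_add, sum_add_distrib]
    ring

end Derangements

section DerangementSum

variable {R : Type*} [CommRing R]

def derangementSum (N : ℕ) (f : R → R) : R :=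
  ∑ m ∈ Icc 1 N, (-1) ^ m * (numDerangements (m - 1) : R) * f (-m)

theorem derangementSum_eq_sum_range (N : ℕ) (f : R → R) :
    derangementSum N f = ∑ k ∈ range N, (-1) ^ (k + 1) * numDerangements k * f (-(k + 1)) := by
  rw [derangementSum, range_eq_Ico, ← Ico_add_one_right_eq_Icc, ← zero_add 1, ← sum_Ico_add']
  push_cast
  rfl

theorem derangementSum_id_mul (N : ℕ) (f : R → R) :
    derangementSum N (fun x ↦ x * f x) =
      derangementSum N (fun x ↦ f (x + 1)) + (-1) ^ (N + 1) * numDerangements N * f (-N) +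
        ∑ k ∈ range (N + 1), f (-k) := by
  set g : ℕ → R := fun k ↦ (-1) ^ (k + 1) * numDerangements k * f (-k)
  have hterm (k : ℕ) : (-1 : R) ^ (k + 1) * numDerangements k * ((-(k + 1)) * f (-(k + 1))) =
      g (k + 1) + f (-(k + 1 : ℕ)) := by
    have h := neg_one_pow_mul_numDerangements_succ (R := R) k
    simp only [g]
    push_cast at h ⊢
    linear_combination f (-(k + 1)) * h
  have hshift : derangementSum N (fun x ↦ f (x + 1)) = ∑ k ∈ range N, g k := by
    rw [derangementSum_eq_sum_range]
    refine sum_congr rfl fun k _ ↦ ?_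
    simp only [g, neg_add, neg_add_cancel_right]
  have hg0 : g 0 = -f (-((0 : ℕ) : R)) := by simp [g]
  rw [hshift, derangementSum_eq_sum_range, sum_congr rfl fun k _ ↦ hterm k, sum_add_distrib]
  linear_combination -sum_range_succ' g N + sum_range_succ g N -
    sum_range_succ' (fun k : ℕ ↦ f (-k)) N - hg0

theorem derangementSum_add_one_pow (N k : ℕ) :
    derangementSum N (fun x : R ↦ (x + 1) ^ k) =
      ∑ j ∈ range (k + 1), (k.choose j : R) * derangementSum N (· ^ j) := by
  simp only [derangementSum, add_pow, one_pow, mul_one, mul_sum]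
  rw [sum_comm]
  exact sum_congr rfl fun _ _ ↦ sum_congr rfl fun _ _ ↦ by ring

end DerangementSum

namespace ZMod

theorem sum_range_natCast {n : ℕ} [NeZero n] {M : Type*} [AddCommMonoid M] (f : ZMod n → M) :
    ∑ j ∈ range n, f j = ∑ x, f x :=
  sum_nbij' (↑) val (fun _ _ ↦ mem_univ _) (fun x _ ↦ mem_range.2 x.val_lt)
    (fun _ hj ↦ val_cast_of_lt (mem_range.1 hj)) (fun x _ ↦ natCast_zmod_val x) fun _ _ ↦ rfl

variable {p : ℕ} [Fact p.Prime]

theorem sum_range_neg_one_pow_mul_numDerangements :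
    ∑ m ∈ range p, (-1 : ZMod p) ^ m * numDerangements m = -1 := by
  have hp : p.Prime := Fact.out
  obtain ⟨q, rfl⟩ : ∃ q, p = q + 1 := ⟨p - 1, by have := hp.one_lt; omega⟩
  have hchoose : ∀ j < q, (((q + 1).choose (j + 1) : ℕ) : ZMod (q + 1)) = 0 := fun j hj ↦
    (natCast_eq_zero_iff _ _).2 (hp.dvd_choose_self j.succ_ne_zero (by omega))
  have hsign : (-1 : ZMod (q + 1)) ^ q = 1 :=
    pow_card_sub_one_eq_one (neg_ne_zero.2 one_ne_zero)
  rw [_root_.sum_range_neg_one_pow_mul_numDerangements, sum_range_succ,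
    sum_eq_zero fun j hj ↦ by rw [Nat.cast_mul, hchoose j (mem_range.1 hj), mul_zero, mul_zero],
    Nat.choose_self, mul_one, hsign, one_mul, zero_add]
  exact wilsons_lemma (p := q + 1)

theorem derangementSum_one :
    derangementSum (p - 1) (fun _ : ZMod p ↦ 1) = numDerangements (p - 1) + 1 := by
  have hp : p.Prime := Fact.out
  have hsign : (-1 : ZMod p) ^ (p - 1) = 1 := pow_card_sub_one_eq_one (neg_ne_zero.2 one_ne_zero)
  have h : ∑ m ∈ range (p - 1), (-1 : ZMod p) ^ m * numDerangements m +
      (-1) ^ (p - 1) * numDerangements (p - 1) = -1 := by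
    rw [← sum_range_succ, Nat.sub_add_cancel hp.one_le]
    exact sum_range_neg_one_pow_mul_numDerangements
  rw [hsign, one_mul] at h
  have hterm (k : ℕ) :
      (-1 : ZMod p) ^ (k + 1) * numDerangements k * 1 = -((-1) ^ k * numDerangements k) := by
    ring
  rw [derangementSum_eq_sum_range, sum_congr rfl fun k _ ↦ hterm k, sum_neg_distrib]
  linear_combination -h

theorem derangementSum_pow_succ {k : ℕ} (hk : k < p - 1) :
    derangementSum (p - 1) (fun x : ZMod p ↦ x ^ (k + 1)) =
      ∑ j ∈ range (k + 1), (k.choose j : ZMod p) * derangementSum (p - 1) (· ^ j) -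
        numDerangements (p - 1) := by
  have hp : p.Prime := Fact.out
  have hpow_sum : ∑ j ∈ range p, (-(j : ZMod p)) ^ k = 0 := by
    rw [sum_range_natCast (fun x ↦ (-x) ^ k)]
    exact (Equiv.sum_comp (Equiv.neg _) (· ^ k)).trans
      (FiniteField.sum_pow_lt_card_sub_one (ZMod p) k (by rwa [card]))
  have hlast : -(((p - 1 : ℕ) : ZMod p)) = 1 := by
    rw [Nat.cast_sub hp.one_le, natCast_self]; ring
  simp only [pow_succ']
  rw [derangementSum_id_mul, Nat.sub_add_cancel hp.one_le, hpow_sum, hlast, pow_card,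
    derangementSum_add_one_pow]
  ring

end ZMod

theorem bell_eq_sum_derangements (p : ℕ) (hp : p.Prime) (n : ℕ)
    (hn1 : 1 ≤ n) (hn2 : n ≤ p - 1) :
    (bell n : ZMod p)
      = ∑ m ∈ Finset.Icc 1 (p - 1),
          (-1) ^ m * (numDerangements (m - 1) : ZMod p) * (-(m : ZMod p)) ^ n := by
  have := Fact.mk hp
  let w := Function.update (fun j ↦ derangementSum (p - 1) (fun x : ZMod p ↦ x ^ j)) 0 1
  have hrec (k : ℕ) (hk : k < p - 1) :
      w (k + 1) = ∑ j ∈ range (k + 1), (k.choose j : ZMod p) * w j := by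
    simp only [w, sum_range_succ' _ k, Function.update_of_ne (Nat.add_one_ne_zero _),
      Function.update_self, Nat.choose_zero_right, Nat.cast_one, one_mul]
    rw [ZMod.derangementSum_pow_succ hk, sum_range_succ', Nat.choose_zero_right, Nat.cast_one,
      one_mul]
    simp only [pow_zero, ZMod.derangementSum_one]
    ring
  have key := eq_bell_of_recursion w (p - 1) (Function.update_self _ _ _) hrec n hn2
  rw [← key]
  exact Function.update_of_ne (by omega) _ _
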